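/- If G is a caterpillar, then ρ_T(G) ≤ 2; consequently, for every n > 3, the path P_n on n vertices satisfies ρ_T(P_n) = 2. -/

import Mathlib

/-- A min-plus `k`-tropical dot product representation of `G` with threshold `t`:
distinct vertices `x, y` are adjacent iff `min_{1 ≤ i ≤ k} (f(x)_i + f(y)_i) ≥ t`
(equivalently, every coordinate sum is at least `t`). -/
def MinPlusRep {V : Type*} (G : SimpleGraph V) (k : ℕ) (f : V → Fin k → ℝ) (t : ℝ) : Prop :=
  0 < t ∧ ∀ x y : V, x ≠ y → (G.Adj x y ↔ ∀ i : Fin k, t ≤ f x i + f y i)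

/-- The min-plus tropical dot product dimension `ρ_T(G)`. -/
noncomputable def rhoT {V : Type*} (G : SimpleGraph V) : ℕ :=
  sInf {k : ℕ | 0 < k ∧ ∃ (f : V → Fin k → ℝ) (t : ℝ), MinPlusRep G k f t}

/-- A caterpillar is a tree (connected acyclic graph) containing a path that includes at
least one endpoint of every edge. -/
def IsCaterpillar {V : Type*} (G : SimpleGraph V) : Prop :=
  G.Connected ∧ G.IsAcyclic ∧
    ∃ (u v : V) (p : G.Walk u v), p.IsPath ∧ ∀ e ∈ G.edgeSet, ∃ w ∈ p.support, w ∈ e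

/-!
Number the spine of a caterpillar 0, 1, 2, … along its path and give every other vertex the
number of its unique spine neighbour. Adjacency is then read off the numbers: two spine vertices
are adjacent iff their numbers differ by one, a spine vertex and a leaf iff their numbers agree,
and two leaves never. With `g (2m) = 2m + 2` and `g (2m + 1) = -(2m + 2)`, send a spine vertex
numbered `i` to `(g i, 1 - g i)` and a leaf to the negative of that. Both coordinate sums are
nonnegative iff `g i + g j ∈ [0, 2]` for two spine vertices, iff `g i = g j` for a spine vertex
and a leaf, and never for two leaves (the sums add up to `-2`); shifting all coordinates makes
the threshold positive. Conversely, a one-dimensional representation of the path `0 - 1 - 2 - 3`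
would give `(f 0 + f 1) + (f 2 + f 3) ≥ 2t > (f 0 + f 2) + (f 1 + f 3)`.
-/

open SimpleGraph

section Representation

variable {V : Type*} {G : SimpleGraph V}

theorem exists_minPlusRep_of_threshold {k : ℕ} (f : V → Fin k → ℝ) (t : ℝ)
    (h : ∀ x y, x ≠ y → (G.Adj x y ↔ ∀ i, t ≤ f x i + f y i)) :
    ∃ f' t', MinPlusRep G k f' t' := by
  refine ⟨fun v i => f v i + (1 - t) / 2, 1, one_pos, fun x y hxy => ?_⟩
  rw [h x y hxy]
  refine forall_congr' fun i => ?_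
  constructor <;> intro <;> linarith

theorem rhoT_le_of_minPlusRep {k : ℕ} {f : V → Fin k → ℝ} {t : ℝ} (hk : 0 < k)
    (h : MinPlusRep G k f t) : rhoT G ≤ k :=
  Nat.sInf_le ⟨hk, f, t, h⟩

theorem two_le_rhoT {k : ℕ} {f : V → Fin k → ℝ} {t : ℝ} (hk : 0 < k)
    (h : MinPlusRep G k f t) (h₁ : ∀ f t, ¬ MinPlusRep G 1 f t) : 2 ≤ rhoT G := by
  refine le_csInf ⟨k, hk, f, t, h⟩ ?_
  rintro m ⟨hm, f', t', h'⟩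
  by_contra! hm₂
  obtain rfl : m = 1 := by omega
  exact h₁ f' t' h'

theorem MinPlusRep.adj_or_adj {f : V → Fin 1 → ℝ} {t : ℝ} (h : MinPlusRep G 1 f t)
    {a b c d : V} (hab : G.Adj a b) (hcd : G.Adj c d) (hac : a ≠ c) (hbd : b ≠ d) :
    G.Adj a c ∨ G.Adj b d := by
  have hab' := (h.2 a b hab.ne).mp hab 0
  have hcd' := (h.2 c d hcd.ne).mp hcd 0
  by_contra! hne
  have hac' : f a 0 + f c 0 < t := by
    by_contra! hle
    exact hne.1 ((h.2 a c hac).mpr fun i => Subsingleton.elim i 0 ▸ hle)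
  have hbd' : f b 0 + f d 0 < t := by
    by_contra! hle
    exact hne.2 ((h.2 b d hbd).mpr fun i => Subsingleton.elim i 0 ▸ hle)
  linarith

end Representation

def IsSpineLabeling {V : Type*} (G : SimpleGraph V) (S : Set V) (σ : V → ℕ) : Prop :=
  ∀ x y, G.Adj x y ↔
    (x ∈ S ∧ y ∈ S ∧ (σ x + 1 = σ y ∨ σ y + 1 = σ x)) ∨
    (x ∈ S ∧ y ∉ S ∧ σ x = σ y) ∨ (x ∉ S ∧ y ∈ S ∧ σ x = σ y)

def spineCoord (i : ℕ) : ℤ := if Even i then i + 2 else -(i + 1)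

theorem spineCoord_add_mem_Icc_iff (i j : ℕ) :
    spineCoord i + spineCoord j ∈ Set.Icc 0 2 ↔ i + 1 = j ∨ j + 1 = i := by
  obtain ⟨m, rfl | rfl⟩ := Nat.even_or_odd' i <;> obtain ⟨n, rfl | rfl⟩ := Nat.even_or_odd' j <;>
    simp [spineCoord] <;> omega

theorem spineCoord_injective : Function.Injective spineCoord := by
  intro i j h
  obtain ⟨m, rfl | rfl⟩ := Nat.even_or_odd' i <;> obtain ⟨n, rfl | rfl⟩ := Nat.even_or_odd' j <;>
    simp [spineCoord] at h <;> omega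

theorem IsSpineLabeling.exists_minPlusRep {V : Type*} {G : SimpleGraph V} {S : Set V}
    {σ : V → ℕ} (h : IsSpineLabeling G S σ) : ∃ f t, MinPlusRep G 2 f t := by
  classical
  let sign (v : V) : ℝ := if v ∈ S then 1 else -1
  let g (v : V) : ℝ := spineCoord (σ v)
  refine exists_minPlusRep_of_threshold (fun v => ![sign v * g v, sign v * (1 - g v)]) 0
    fun x y _ => ?_
  have hinj : g x = g y ↔ σ x = σ y := by
    simp only [g, Int.cast_inj, spineCoord_injective.eq_iff]
  have hcons : 0 ≤ g x + g y ∧ g x + g y ≤ 2 ↔ σ x + 1 = σ y ∨ σ y + 1 = σ x := by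
    rw [← spineCoord_add_mem_Icc_iff, Set.mem_Icc]
    simp only [g]
    constructor <;> rintro ⟨h1, h2⟩ <;> exact ⟨by exact_mod_cast h1, by exact_mod_cast h2⟩
  rw [h x y, Fin.forall_fin_two]
  simp only [Matrix.cons_val_zero, Matrix.cons_val_one, sign]
  by_cases hx : x ∈ S <;> by_cases hy : y ∈ S <;>
    simp only [hx, hy, if_true, if_false, not_true, not_false_eq_true, true_and, false_and,
      and_false, or_false, false_or, one_mul, neg_one_mul]
  · rw [← hcons]
    constructor <;> rintro ⟨h₁, h₂⟩ <;> constructor <;> linarith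
  · rw [← hinj]
    constructor
    · intro e; constructor <;> linarith
    · rintro ⟨h₁, h₂⟩; linarith
  · rw [← hinj]
    constructor
    · intro e; constructor <;> linarith
    · rintro ⟨h₁, h₂⟩; linarith
  · refine iff_of_false id fun ⟨h₁, h₂⟩ => ?_
    linarith

theorem exists_isSpineLabeling_of_leaves {V : Type*} {G : SimpleGraph V} {S : Set V} {τ : V → ℕ}
    (hinj : Set.InjOn τ S) (hS : ∀ x ∈ S, ∀ y ∈ S, G.Adj x y ↔ τ x + 1 = τ y ∨ τ y + 1 = τ x)
    (hleaf : ∀ l ∉ S, ∃ s ∈ S, ∀ y, G.Adj l y ↔ y = s) : ∃ σ, IsSpineLabeling G S σ := by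
  classical
  choose N hNS hN using hleaf
  refine ⟨fun v => if hv : v ∈ S then τ v else τ (N v hv), fun x y => ?_⟩
  by_cases hx : x ∈ S <;> by_cases hy : y ∈ S <;>
    simp only [hx, hy, dif_pos, dif_neg, not_true, not_false_eq_true, true_and, false_and,
      and_false, or_false, false_or]
  · exact hS x hx y hy
  · rw [G.adj_comm, hN y hy, hinj.eq_iff hx (hNS y hy)]
  · rw [hN x hx, hinj.eq_iff (hNS x hx) hy, eq_comm]
  · exact iff_of_false (fun h => hy ((hN x hx y).mp h ▸ hNS x hx)) id

namespace SimpleGraph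

variable {V : Type*} {G : SimpleGraph V}

theorem IsAcyclic.mem_edges_of_adj (hG : G.IsAcyclic) {x y : V} (h : G.Adj x y)
    (q : G.Walk x y) : s(x, y) ∈ q.edges :=
  isBridge_iff_forall_walk_mem_edges.mp (isAcyclic_iff_forall_adj_isBridge.mp hG h) q

theorem Walk.exists_walk_edges_subset {u v x y : V} (p : G.Walk u v) (hx : x ∈ p.support)
    (hy : y ∈ p.support) : ∃ q : G.Walk x y, q.edges ⊆ p.edges := by
  classical
  refine ⟨(p.takeUntil x hx).reverse.append (p.takeUntil y hy), fun e he => ?_⟩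
  rw [Walk.edges_append, Walk.edges_reverse, List.mem_append, List.mem_reverse] at he
  exact he.elim (p.edges_takeUntil_subset_edges hx ·) (p.edges_takeUntil_subset_edges hy ·)

theorem IsAcyclic.adj_iff_toSubgraph_adj (hG : G.IsAcyclic) {u v x y : V} (p : G.Walk u v)
    (hx : x ∈ p.support) (hy : y ∈ p.support) : G.Adj x y ↔ p.toSubgraph.Adj x y := by
  refine ⟨fun h => ?_, fun h => h.adj_sub⟩
  obtain ⟨q, hq⟩ := p.exists_walk_edges_subset hx hy
  exact Walk.adj_toSubgraph_iff_mem_edges.mpr (hq (hG.mem_edges_of_adj h q))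

theorem IsAcyclic.eq_of_adj_of_notMem_support (hG : G.IsAcyclic) {u v l s s' : V}
    (p : G.Walk u v) (hl : l ∉ p.support) (hs : s ∈ p.support) (hs' : s' ∈ p.support)
    (h : G.Adj l s) (h' : G.Adj l s') : s = s' := by
  obtain ⟨q, hq⟩ := p.exists_walk_edges_subset hs' hs
  have hmem := hG.mem_edges_of_adj h (.cons h' q)
  rw [Walk.edges_cons, List.mem_cons] at hmem
  exact hmem.elim Sym2.congr_right.mp fun he => (hl (p.fst_mem_support_of_mem_edges (hq he))).elim

theorem Walk.IsPath.toSubgraph_adj_iff [DecidableEq V] {u v x y : V} {p : G.Walk u v}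
    (hp : p.IsPath) (hx : x ∈ p.support) (hy : y ∈ p.support) :
    p.toSubgraph.Adj x y ↔
      p.support.idxOf x + 1 = p.support.idxOf y ∨ p.support.idxOf y + 1 = p.support.idxOf x :=
  (hp.pathGraphIsoToSubgraph.symm.map_adj_iff (v := ⟨x, p.mem_verts_toSubgraph.mpr hx⟩)
    (w := ⟨y, p.mem_verts_toSubgraph.mpr hy⟩)).symm.trans pathGraph_adj

end SimpleGraph

theorem IsCaterpillar.exists_isSpineLabeling {V : Type*} {G : SimpleGraph V}
    (hG : IsCaterpillar G) : ∃ (S : Set V) (σ : V → ℕ), IsSpineLabeling G S σ := by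
  classical
  obtain ⟨hconn, hacyc, u, v, p, hp, hcov⟩ := hG
  have hspine {x y : V} (h : G.Adj x y) (hx : x ∉ p.support) : y ∈ p.support := by
    obtain ⟨w, hw, hwe⟩ := hcov _ (G.mem_edgeSet.mpr h)
    rcases Sym2.mem_iff.mp hwe with rfl | rfl
    exacts [absurd hw hx, hw]
  refine ⟨{x | x ∈ p.support}, exists_isSpineLabeling_of_leaves (τ := p.support.idxOf)
    (fun x hx y _ h => (List.idxOf_inj hx).mp h)
    (fun x hx y hy => (hacyc.adj_iff_toSubgraph_adj p hx hy).trans (hp.toSubgraph_adj_iff hx hy))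
    fun l hl => ?_⟩
  obtain ⟨w⟩ := hconn.preconnected l u
  have hadj := w.adj_snd (w.not_nil_of_ne fun h => hl (h ▸ p.start_mem_support))
  exact ⟨_, hspine hadj hl, fun y => ⟨fun h => hacyc.eq_of_adj_of_notMem_support p hl
    (hspine h hl) (hspine hadj hl) h hadj, fun h => h ▸ hadj⟩⟩

theorem isSpineLabeling_pathGraph (n : ℕ) :
    IsSpineLabeling (pathGraph n) Set.univ Fin.val := fun x y => by
  simp [pathGraph_adj]

theorem not_minPlusRep_pathGraph_one {n : ℕ} (hn : 3 < n) (f : Fin n → Fin 1 → ℝ) (t : ℝ) :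
    ¬ MinPlusRep (pathGraph n) 1 f t := fun h => by
  simpa [pathGraph_adj, Fin.ext_iff] using h.adj_or_adj (a := ⟨0, by omega⟩) (b := ⟨1, by omega⟩)
    (c := ⟨2, by omega⟩) (d := ⟨3, by omega⟩) (by simp [pathGraph_adj]) (by simp [pathGraph_adj])
    (by simp [Fin.ext_iff]) (by simp [Fin.ext_iff])

/-- Every caterpillar satisfies `ρ_T(G) ≤ 2`; consequently `ρ_T(P_n) = 2` for all `n > 3`. -/
theorem stmt_18 :
    (∀ (V : Type) [Fintype V] (G : SimpleGraph V), IsCaterpillar G → rhoT G ≤ 2) ∧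
      (∀ n : ℕ, 3 < n → rhoT (SimpleGraph.pathGraph n) = 2) := by
  refine ⟨fun V _ G hG => ?_, fun n hn => ?_⟩
  · obtain ⟨S, σ, hσ⟩ := hG.exists_isSpineLabeling
    obtain ⟨f, t, hf⟩ := hσ.exists_minPlusRep
    exact rhoT_le_of_minPlusRep two_pos hf
  · obtain ⟨f, t, hf⟩ := (isSpineLabeling_pathGraph n).exists_minPlusRep
    exact le_antisymm (rhoT_le_of_minPlusRep two_pos hf)
      (two_le_rhoT two_pos hf (not_minPlusRep_pathGraph_one hn))
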